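/- Let N ≥ 1, r ≥ 1 and n ≥ 1 be integers. Then the higher order hypergeometric Bernoulli polynomials satisfy the recurrence B_{N,n+1}^{(r)}(x) = (x − r/(N+1)) · B_{N,n}^{(r)}(x) − rN · ∑_{k=0}^{n−1} C(n, k) · (B_{N,n−k+1}/(n−k+1)) · B_{N,k}^{(r)}(x) as an identity of polynomials in ℚ[x]. -/

import Mathlib

open Finset Polynomial PowerSeries

open scoped Nat

/-!
Differentiating `F · (e^t - T_{N-1}(t)) = t^N/N!` and using
`t (e^t - T_{N-1}(t))' = t (e^t - T_{N-1}(t)) + N t^N/N!` shows that `F` solves the Riccati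
equation `t F' = N F - t F - N F²`. Hence `G = F^r e^{xt}` satisfies
`t G' = rN (G - F G) + (x - r) t G`. Comparing the coefficients of `t^{n+1}` (the product of two
exponential generating functions is that of their binomial convolution) and using
`F = 1 - t/(N+1) + O(t²)` gives the recurrence.
-/

theorem Nat.cast_succ_choose_div_succ {K : Type*} [Field K] [CharZero K] {n k : ℕ}
    (hk : k ≤ n) : ((n + 1).choose k : K) / (n + 1) = n.choose k / ((n : K) - k + 1) := by
  have h : (n.choose k * (n + 1) : K) = (n + 1).choose k * (n - k + 1) := by
    rw [← Nat.cast_sub hk]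
    exact_mod_cast (Nat.sub_add_comm hk).symm ▸ Nat.choose_mul_succ_eq n k
  have hnk : (n : K) - k + 1 ≠ 0 := by
    rw [← Nat.cast_sub hk]
    exact Nat.cast_add_one_ne_zero _
  rw [div_eq_div_iff (Nat.cast_add_one_ne_zero n) hnk]
  linear_combination -h

theorem Nat.inv_cast_factorial_succ_mul {K : Type*} [Field K] [CharZero K] (m : ℕ) :
    ((m + 1)! : K)⁻¹ * (m + 1) = (m ! : K)⁻¹ := by
  rw [Nat.factorial_succ, Nat.cast_mul, mul_inv, Nat.cast_succ, mul_comm, ← mul_assoc,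
    mul_inv_cancel₀ (Nat.cast_add_one_ne_zero m), one_mul]

namespace PowerSeries

theorem X_mul_derivative_monomial {R : Type*} [CommSemiring R] (n : ℕ) (a : R) :
    X * d⁄dX R (monomial n a) = C (n : R) * monomial n a := by
  ext m
  rcases m with _ | m
  · rw [coeff_zero_X_mul, coeff_C_mul, coeff_monomial]
    split_ifs with h
    · simp [← h]
    · simp
  · simp only [coeff_succ_X_mul, coeff_derivative, coeff_C_mul, coeff_monomial]
    split_ifs with h
    · simp [← h, mul_comm]
    · simp

section Tail

variable (K : Type*) [Field K] [CharZero K]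

/-- `e^t - T_{N-1}(t)`. -/
def expTail (N : ℕ) : K⟦X⟧ := mk fun j => if N ≤ j then (j ! : K)⁻¹ else 0

variable {K}

theorem X_mul_derivative_expTail (N : ℕ) :
    X * d⁄dX K (expTail K N) = X * expTail K N + C (N : K) * monomial N (N ! : K)⁻¹ := by
  ext m
  rcases m with _ | m
  · rw [coeff_zero_X_mul, map_add, coeff_zero_X_mul, coeff_C_mul, coeff_monomial]
    split_ifs with h <;> simp [h]
  · rw [coeff_succ_X_mul, coeff_derivative, map_add, coeff_succ_X_mul, coeff_C_mul,
      coeff_monomial]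
    simp only [expTail, coeff_mk]
    rcases lt_trichotomy (m + 1) N with h | rfl | h
    · simp [show ¬ N ≤ m + 1 by omega, show ¬ N ≤ m by omega, h.ne]
    · simp [mul_comm]
    · simp [show N ≤ m + 1 by omega, show N ≤ m by omega, h.ne',
        Nat.inv_cast_factorial_succ_mul]

theorem expTail_ne_zero (N : ℕ) : expTail K N ≠ 0 := fun h => by
  simpa [expTail, Nat.factorial_ne_zero] using congrArg (coeff N) h

variable {N : ℕ} {F : K⟦X⟧}

theorem X_mul_derivative_eq_of_mul_expTail_eq (hF : F * expTail K N = monomial N (N ! : K)⁻¹) :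
    X * d⁄dX K F = C (N : K) * F - X * F - C (N : K) * F ^ 2 := by
  have hD : X * d⁄dX K (F * expTail K N) = C (N : K) * (F * expTail K N) := by
    rw [hF, X_mul_derivative_monomial]
  rw [Derivation.leibniz, smul_eq_mul, smul_eq_mul, mul_add, ← mul_assoc, mul_comm X F,
    mul_assoc, X_mul_derivative_expTail, ← hF] at hD
  refine mul_left_cancel₀ (expTail_ne_zero (K := K) N) ?_
  linear_combination hD

theorem constantCoeff_eq_one_of_mul_expTail_eq (hF : F * expTail K N = monomial N (N ! : K)⁻¹) :
    constantCoeff F = 1 := by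
  have h := congrArg (coeff N) hF
  rw [coeff_mul, Finset.sum_eq_single (0, N)] at h
  · simpa [expTail, coeff_monomial, Nat.factorial_ne_zero] using h
  · rintro ⟨i, j⟩ hij hne
    rw [Finset.HasAntidiagonal.mem_antidiagonal] at hij
    rw [ne_eq, Prod.mk.injEq] at hne
    simp [expTail, show ¬ N ≤ j by omega]
  · simp

theorem coeff_one_eq_of_mul_expTail_eq (hF : F * expTail K N = monomial N (N ! : K)⁻¹) :
    coeff 1 F = -((N : K) + 1)⁻¹ := by
  have h := congrArg (coeff (R := K) 1) (X_mul_derivative_eq_of_mul_expTail_eq hF)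
  have h0 := constantCoeff_eq_one_of_mul_expTail_eq hF
  rw [← coeff_zero_eq_constantCoeff_apply] at h0
  rw [coeff_succ_X_mul, coeff_derivative, map_sub, map_sub, coeff_succ_X_mul, coeff_C_mul,
    coeff_C_mul, pow_two, coeff_mul, Finset.Nat.sum_antidiagonal_succ,
    Finset.Nat.antidiagonal_zero, Finset.sum_singleton] at h
  simp only [zero_add, Nat.cast_zero, mul_one, h0] at h
  have hN : (N : K) + 1 ≠ 0 := Nat.cast_add_one_ne_zero N
  field_simp
  linear_combination h

end Tail

theorem derivative_map {R S : Type*} [CommSemiring R] [CommSemiring S] (f : R →+* S)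
    (p : R⟦X⟧) : d⁄dX S (map f p) = map f (d⁄dX R p) := by
  ext m
  simp [coeff_derivative]

section Ring

variable {A : Type*} [CommRing A] {c : A} {Φ : A⟦X⟧}

theorem X_mul_derivative_pow_of_X_mul_derivative_eq
    (hΦ : X * d⁄dX A Φ = C c * Φ - X * Φ - C c * Φ ^ 2) (r : ℕ) :
    X * d⁄dX A (Φ ^ r) = C (r : A) * (C c * Φ ^ r - X * Φ ^ r - C c * Φ ^ (r + 1)) := by
  induction r with
  | zero => simp
  | succ r ih =>
    rw [pow_succ, Derivation.leibniz, smul_eq_mul, smul_eq_mul]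
    simp only [Nat.cast_succ, map_add, map_one]
    linear_combination Φ ^ r * hΦ + Φ * ih

theorem X_mul_derivative_pow_mul_of_X_mul_derivative_eq
    (hΦ : X * d⁄dX A Φ = C c * Φ - X * Φ - C c * Φ ^ 2) (r : ℕ) {a : A} {E : A⟦X⟧}
    (hE : d⁄dX A E = C a * E) :
    X * d⁄dX A (Φ ^ r * E) = C (r * c) * (Φ ^ r * E - Φ * (Φ ^ r * E))
      + C (a - r) * X * (Φ ^ r * E) := by
  rw [Derivation.leibniz, smul_eq_mul, smul_eq_mul, hE, map_mul, map_sub]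
  linear_combination E * X_mul_derivative_pow_of_X_mul_derivative_eq hΦ r

end Ring

section Algebra

variable {A : Type*} [CommRing A] [Algebra ℚ A]

def egf (b : ℕ → A) : A⟦X⟧ := mk fun m => (m ! : ℚ)⁻¹ • b m

@[simp]
theorem coeff_egf (b : ℕ → A) (n : ℕ) : coeff n (egf b) = (n ! : ℚ)⁻¹ • b n :=
  coeff_mk _ _

theorem derivative_egf (P : ℕ → A) : d⁄dX A (egf P) = egf fun m => P (m + 1) := by
  ext m
  rw [coeff_derivative, coeff_egf, coeff_egf, ← Nat.cast_succ, ← nsmul_eq_mul',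
    ← Nat.cast_smul_eq_nsmul ℚ, smul_smul, mul_comm, Nat.cast_succ,
    Nat.inv_cast_factorial_succ_mul]

theorem derivative_egf_pow (a : A) : d⁄dX A (egf (a ^ ·)) = C a * egf (a ^ ·) := by
  rw [derivative_egf]
  ext m
  rw [coeff_egf, coeff_C_mul, coeff_egf, pow_succ', mul_smul_comm]

theorem egf_mul_egf (b P : ℕ → A) :
    egf b * egf P = egf fun n => ∑ k ∈ range (n + 1), n.choose k • (b (n - k) * P k) := by
  ext n
  rw [mul_comm, coeff_mul, Finset.Nat.sum_antidiagonal_eq_sum_range_succ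
    (fun i j => coeff i (egf P) * coeff j (egf b)), coeff_egf, smul_sum]
  refine sum_congr rfl fun k hk => ?_
  have hkn : k ≤ n := Nat.le_of_lt_succ (mem_range.mp hk)
  have hfac : (n ! : ℚ)⁻¹ * n.choose k = (k ! : ℚ)⁻¹ * ((n - k)! : ℚ)⁻¹ := by
    rw [← Nat.choose_mul_factorial_mul_factorial hkn]
    have := Nat.choose_pos hkn
    push_cast
    field_simp
  rw [coeff_egf, coeff_egf, ← Nat.cast_smul_eq_nsmul ℚ, smul_smul, hfac, smul_mul_smul_comm,
    mul_comm (P k)]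

theorem recurrence_of_egf_eq_egf_pow_mul {b P : ℕ → A} {a c : A}
    (hΦ : X * d⁄dX A (egf b) = C c * egf b - X * egf b - C c * egf b ^ 2) (hb : b 0 = 1)
    {r : ℕ} (hP : egf P = egf b ^ r * egf (a ^ ·)) (n : ℕ) :
    P (n + 1) = (a - r - r * c * b 1) * P n
      - r * c * ∑ k ∈ range n,
          ((n.choose k : ℚ) / ((n : ℚ) - k + 1)) • (b (n - k + 1) * P k) := by
  have hG := X_mul_derivative_pow_mul_of_X_mul_derivative_eq hΦ r (derivative_egf_pow a)
  rw [← hP, derivative_egf, egf_mul_egf] at hG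
  have h := congrArg (coeff (n + 1)) hG
  have hsum : ∑ k ∈ range n, (n + 1).choose k • (b (n + 1 - k) * P k)
      = ((n : ℚ) + 1) • ∑ k ∈ range n,
          ((n.choose k : ℚ) / ((n : ℚ) - k + 1)) • (b (n - k + 1) * P k) := by
    rw [smul_sum]
    refine sum_congr rfl fun k hk => ?_
    have hkn : k ≤ n := (mem_range.mp hk).le
    rw [smul_smul, ← Nat.cast_succ_choose_div_succ hkn,
      mul_div_cancel₀ _ (Nat.cast_add_one_ne_zero n), Nat.cast_smul_eq_nsmul,
      Nat.sub_add_comm hkn]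
  rw [mul_assoc (C _) X, coeff_succ_X_mul, map_add, coeff_C_mul, coeff_C_mul, map_sub,
    coeff_succ_X_mul, coeff_egf, coeff_egf, coeff_egf, coeff_egf, sum_range_succ, sum_range_succ,
    Nat.choose_succ_self_right, Nat.choose_self, Nat.add_sub_cancel_left, Nat.sub_self, hb,
    one_smul, one_mul, hsum] at h
  simp only [mul_sub, mul_add, mul_smul_comm, smul_add] at h
  rw [show (a - r - r * c * b 1) * P n = (a - r) * P n - r * c * (b 1 * P n) by ring]
  linear_combination
    (norm := match_scalars <;> push_cast [Nat.factorial_succ] <;> field_simp <;> ring)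
    (n ! : ℚ) • h

end Algebra

end PowerSeries

theorem hypergeometric_bernoulli_recurrence_general
    (N r n : ℕ)
    (F : PowerSeries ℚ)
    (hF : F * (PowerSeries.mk fun j => if N ≤ j then ((j.factorial : ℚ))⁻¹ else 0)
        = PowerSeries.mk fun j => if j = N then ((N.factorial : ℚ))⁻¹ else 0)
    (B : ℕ → ℚ)
    (hB : ∀ m : ℕ, B m = (m.factorial : ℚ) * PowerSeries.coeff (R := ℚ) m F)
    (Br : ℕ → Polynomial ℚ)
    (hBr : PowerSeries.mk (fun m => ((m.factorial : ℚ))⁻¹ • Br m)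
        = (PowerSeries.map (Polynomial.C : ℚ →+* Polynomial ℚ) F) ^ r
            * PowerSeries.mk (fun m => ((m.factorial : ℚ))⁻¹ • (Polynomial.X : Polynomial ℚ) ^ m)) :
    Br (n + 1)
      = (Polynomial.X - Polynomial.C ((r : ℚ) / ((N : ℚ) + 1))) * Br n
        - Polynomial.C ((r : ℚ) * (N : ℚ)) *
            ∑ k ∈ Finset.range n,
              Polynomial.C ((n.choose k : ℚ) * (B (n - k + 1) / ((n : ℚ) - (k : ℚ) + 1)))
                * Br k := by
  have hF' : F * expTail ℚ N = PowerSeries.monomial N (N ! : ℚ)⁻¹ := by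
    rw [expTail, hF]
    ext
    simp [PowerSeries.coeff_monomial]
  have hegf : PowerSeries.map Polynomial.C F = egf fun m => Polynomial.C (B m) := by
    ext m
    rw [PowerSeries.coeff_map, coeff_egf, hB, Polynomial.smul_eq_C_mul, ← map_mul,
      inv_mul_cancel_left₀ (Nat.cast_ne_zero.mpr m.factorial_ne_zero)]
  have hODE :=
    congrArg (PowerSeries.map Polynomial.C) (X_mul_derivative_eq_of_mul_expTail_eq hF')
  simp only [map_sub, map_mul, map_pow, PowerSeries.map_X, PowerSeries.map_C,
    ← PowerSeries.derivative_map, hegf] at hODE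
  have hB0 : Polynomial.C (B 0) = 1 := by
    simp [hB, PowerSeries.coeff_zero_eq_constantCoeff_apply,
      constantCoeff_eq_one_of_mul_expTail_eq hF']
  rw [hegf] at hBr
  rw [recurrence_of_egf_eq_egf_pow_mul (P := Br) hODE hB0 hBr n]
  have hsum : ∑ k ∈ range n, ((n.choose k : ℚ) / ((n : ℚ) - k + 1)) •
      (Polynomial.C (B (n - k + 1)) * Br k)
      = ∑ k ∈ range n,
          Polynomial.C ((n.choose k : ℚ) * (B (n - k + 1) / ((n : ℚ) - k + 1))) * Br k := by
    refine sum_congr rfl fun k _ => ?_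
    rw [Polynomial.smul_eq_C_mul, ← mul_assoc, ← map_mul, div_mul_eq_mul_div, mul_div_assoc]
  have hrC : (r : ℚ[X]) = Polynomial.C (r : ℚ) := (Polynomial.C_eq_natCast r).symm
  have hcoeff : (r : ℚ[X]) + r * Polynomial.C (N : ℚ) * Polynomial.C (B 1)
      = Polynomial.C ((r : ℚ) / ((N : ℚ) + 1)) := by
    rw [hrC, hB, coeff_one_eq_of_mul_expTail_eq hF', ← map_mul, ← map_mul, ← map_add]
    congr 1
    field_simp
    ring
  rw [hsum, map_mul, ← hrC]
  linear_combination (-Br n) * hcoeff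

/-- Theorem 5: recurrence for the higher order hypergeometric Bernoulli polynomials:
`B_{N,n+1}^{(r)}(x) = (x - r/(N+1))·B_{N,n}^{(r)}(x)
  - rN·∑_{k=0}^{n-1} C(n,k)·(B_{N,n-k+1}/(n-k+1))·B_{N,k}^{(r)}(x)`.
Here `F` is the exponential generating function of the hypergeometric Bernoulli numbers,
i.e. the unique power series with `F·(e^t - T_{N-1}(t)) = t^N/N!`, the numbers `B m = B_{N,m}`
are its scaled coefficients, and `Br m = B_{N,m}^{(r)}(x)` is the family of polynomials whose
exponential generating function is `F^r · e^{xt}`. -/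
theorem hypergeometric_bernoulli_recurrence
    (N r n : ℕ) (hN : 1 ≤ N) (hr : 1 ≤ r) (hn : 1 ≤ n)
    (F : PowerSeries ℚ)
    (hF : F * (PowerSeries.mk fun j => if N ≤ j then ((j.factorial : ℚ))⁻¹ else 0)
        = PowerSeries.mk fun j => if j = N then ((N.factorial : ℚ))⁻¹ else 0)
    (B : ℕ → ℚ)
    (hB : ∀ m : ℕ, B m = (m.factorial : ℚ) * PowerSeries.coeff (R := ℚ) m F)
    (Br : ℕ → Polynomial ℚ)
    (hBr : PowerSeries.mk (fun m => ((m.factorial : ℚ))⁻¹ • Br m)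
        = (PowerSeries.map (Polynomial.C : ℚ →+* Polynomial ℚ) F) ^ r
            * PowerSeries.mk (fun m => ((m.factorial : ℚ))⁻¹ • (Polynomial.X : Polynomial ℚ) ^ m)) :
    Br (n + 1)
      = (Polynomial.X - Polynomial.C ((r : ℚ) / ((N : ℚ) + 1))) * Br n
        - Polynomial.C ((r : ℚ) * (N : ℚ)) *
            ∑ k ∈ Finset.range n,
              Polynomial.C ((n.choose k : ℚ) * (B (n - k + 1) / ((n : ℚ) - (k : ℚ) + 1)))
                * Br k :=
  hypergeometric_bernoulli_recurrence_general N r n F hF B hB Br hBr
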